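/- arXiv:2406.17153 — 3 statements merged into one kernel-verified Lean document; each statement's English description precedes it below -/
import Mathlib

section
/- A feasible flow f* is a side-constrained user equilibrium if and only if it solves the quasi-variational inequality: for all admissible ε-deviations f ∈ D(f*), the inner product ⟨π, f − f*⟩ is non-negative. -/
open scoped BigOperators
open Filter

/-- A multi-commodity path flow: for each commodity `i` and strategy `p ∈ 𝒫 i`, a real value. -/
abbrev PFlow (I : Type) (P : I → Type) := (i : I) → P i → ℝ

variable {I : Type} [Fintype I] [DecidableEq I]
  {P : I → Type} [∀ i, Fintype (P i)] [∀ i, DecidableEq (P i)]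
  {E : Type} [Fintype E] [DecidableEq E]

/-- The ε-deviation `f_{i,p→q}(ε) = f + ε (1_{i,q} - 1_{i,p})`. -/
def deviate (f : PFlow I P) (i : I) (p q : P i) (ε : ℝ) : PFlow I P :=
  Function.update f i (fun r => f i r + ε * ((if r = q then 1 else 0) - (if r = p then 1 else 0)))

/-- A (schedule-based) transit network in abstract, path-based form: every strategy of
commodity `i` is described by its set of edges, with distinguished boarding and driving
edges, a map `succ` taking each boarding edge to its succeeding driving edge, capacities `ν`
on edges, demands `Q` and fixed path costs `π`. -/
structure TN (I : Type) (P : I → Type) (E : Type) where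
  boarding : Finset E
  driving : Finset E
  succ : E → E
  edges : (i : I) → P i → Finset E
  ν : E → ℝ
  Q : I → ℝ
  π : (i : I) → P i → ℝ

namespace TN

variable (N : TN I P E)

/-- Total flow on an edge. -/
def edgeFlow (f : PFlow I P) (e : E) : ℝ :=
  ∑ i, ∑ p ∈ Finset.univ.filter (fun p : P i => e ∈ N.edges i p), f i p

def DemandFeasible (f : PFlow I P) : Prop :=
  (∀ i (p : P i), 0 ≤ f i p) ∧ ∀ i, ∑ p, f i p = N.Q i

def CapacityFeasible (f : PFlow I P) : Prop :=
  ∀ e ∈ N.driving, N.edgeFlow f e ≤ N.ν e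

def Feasible (f : PFlow I P) : Prop := N.DemandFeasible f ∧ N.CapacityFeasible f

/-- `f_{i,p→q}(ε)` is an admissible ε-deviation. -/
def Admissible (f : PFlow I P) (i : I) (p q : P i) (ε : ℝ) : Prop :=
  0 < ε ∧ ε ≤ f i p ∧
    ∀ e ∈ N.boarding, e ∈ N.edges i q →
      N.edgeFlow (deviate f i p q ε) (N.succ e) ≤ N.ν (N.succ e)

/-- `q` is an available alternative to `p` for commodity `i` given `f`. -/
def Available (f : PFlow I P) (i : I) (p q : P i) : Prop :=
  ∃ ε, N.Admissible f i p q ε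

/-- Side-constrained user equilibrium. -/
def IsUE (f : PFlow I P) : Prop :=
  N.Feasible f ∧
    ∀ i (p : P i), 0 < f i p → ∀ q : P i, N.Available f i p q → N.π i p ≤ N.π i q

end TN

/-- `D(f)`: the set of all admissible ε-deviations of `f`. -/
def TN.Dset (N : TN I P E) (f : PFlow I P) : Set (PFlow I P) :=
  { g | ∃ (i : I) (p q : P i) (ε : ℝ), N.Admissible f i p q ε ∧ g = deviate f i p q ε }

lemma key_sum (N : TN I P E) (f : PFlow I P) (i : I) (p q : P i) (ε : ℝ) :
    ∑ j, ∑ r, N.π j r * (deviate f i p q ε j r - f j r)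
      = ε * (N.π i q - N.π i p) := by
  rw [Finset.sum_eq_single i]
  · simp only [deviate, Function.update_self]
    have : ∀ r : P i,
        N.π i r * (f i r + ε * ((if r = q then 1 else 0) - (if r = p then 1 else 0)) - f i r)
          = ε * ((if r = q then N.π i r else 0) - (if r = p then N.π i r else 0)) := by
      intro r; split_ifs <;> ring
    rw [Finset.sum_congr rfl fun r _ => this r, ← Finset.mul_sum,
      Finset.sum_sub_distrib, Finset.sum_ite_eq', Finset.sum_ite_eq']
    simp
  · intro j _ hj
    simp [deviate, Function.update_of_ne hj]
  · simp


/-- A feasible flow `f*` is a side-constrained user equilibrium iff it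
solves the quasi-variational inequality `⟨π, f − f*⟩ ≥ 0` for all `f ∈ D(f*)`. -/
theorem stmt0 (N : TN I P E) (fstar : PFlow I P) (hfeas : N.Feasible fstar) :
    N.IsUE fstar ↔
      ∀ g ∈ N.Dset fstar, 0 ≤ ∑ i, ∑ p, N.π i p * (g i p - fstar i p) := by
  constructor
  · rintro ⟨-, hue⟩ g ⟨i, p, q, ε, hadm, rfl⟩
    rw [key_sum]
    have hfp : 0 < fstar i p := lt_of_lt_of_le hadm.1 hadm.2.1
    have := hue i p hfp q ⟨ε, hadm⟩
    nlinarith [hadm.1]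
  · intro hvi
    refine ⟨hfeas, fun i p hfp q ⟨ε, hadm⟩ => ?_⟩
    have := hvi (deviate fstar i p q ε) ⟨i, p, q, ε, hadm, rfl⟩
    rw [key_sum] at this
    nlinarith [hadm.1]
end

section
/- There exists a single-commodity schedule-based transit network instance with departure time choice that admits no side-constrained user equilibrium, and moreover no ε-approximate user equilibrium for any prescribed ε > 0 (after suitably scaling the timetable). -/
open scoped BigOperators
open Filter

variable {V E : Type} [Fintype V] [DecidableEq V] [Fintype E] [DecidableEq E]
  {I : Type} [Fintype I] [DecidableEq I]
  {P : I → Type} [∀ i, Fintype (P i)] [∀ i, DecidableEq (P i)]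

/-- A schedule-based time-expanded transit network: nodes `V` with times, edges `E` with
distinguished boarding and driving edges, `succ` mapping each boarding edge to its
succeeding driving edge, `prev`/`first` describing the chain of driving edges of each
vehicle, capacities `ν`, and for each commodity `i` a demand, a set of allowed departure
nodes `src i`, destination nodes `dst i`, a designated outside option `out i`, the routes
(edge lists) of all strategies, an outside-option cost and a cost function of the
departure and arrival times. -/
structure TEN (V E I : Type) (P : I → Type) where
  tail : E → V
  head : E → V
  time : V → ℝ
  boarding : Finset E
  driving : Finset E
  succ : E → E
  prev : E → E
  first : Finset E
  ν : E → ℝ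
  Q : I → ℝ
  src : I → Finset V
  dst : I → Finset V
  out : (i : I) → P i
  route : (i : I) → P i → List E
  πout : I → ℝ
  cost : I → ℝ → ℝ → ℝ

namespace TEN

variable (N : TEN V E I P)

/-- Structural validity of the time-expanded transit network. -/
def Valid : Prop :=
  (∀ i, N.route i (N.out i) = []) ∧
  (∀ i (p : P i), p ≠ N.out i →
    N.route i p ≠ [] ∧
    (N.route i p).Chain' (fun e e' => N.head e = N.tail e') ∧
    (∀ e, (N.route i p).head? = some e → N.tail e ∈ N.src i) ∧
    (∀ e, (N.route i p).getLast? = some e → N.head e ∈ N.dst i)) ∧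
  (∀ e ∈ N.boarding, N.succ e ∈ N.driving ∧ N.tail (N.succ e) = N.head e) ∧
  (∀ i (p : P i), ∀ (k : ℕ) (e : E), (N.route i p)[k]? = some e → e ∈ N.boarding →
      (N.route i p)[k + 1]? = some (N.succ e)) ∧
  (∀ e ∈ N.driving, e ∉ N.first → N.prev e ∈ N.driving ∧ N.ν (N.prev e) = N.ν e) ∧
  (∀ i (p : P i), ∀ e ∈ N.driving, e ∈ N.route i p → e ∉ N.first →
      ((∃ b ∈ N.boarding, N.succ b = e ∧ b ∈ N.route i p) ∨ N.prev e ∈ N.route i p)) ∧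
  (∀ i (p : P i), ∀ e ∈ N.driving, e ∈ N.route i p → e ∈ N.first →
      ∃ b ∈ N.boarding, N.succ b = e ∧ b ∈ N.route i p) ∧
  (∀ e : E, N.time (N.tail e) ≤ N.time (N.head e))

/-- Departure time of a strategy (time of the tail of its first edge). -/
def depTime (i : I) (p : P i) : ℝ :=
  ((N.route i p).head?.map fun e => N.time (N.tail e)).getD 0

/-- Arrival time of a strategy (time of the head of its last edge). -/
def arrTime (i : I) (p : P i) : ℝ :=
  ((N.route i p).getLast?.map fun e => N.time (N.head e)).getD 0

/-- The cost of a strategy: the outside-option cost, or the cost determined by the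
departure and arrival times. -/
def π (i : I) (p : P i) : ℝ :=
  if p = N.out i then N.πout i else N.cost i (N.depTime i p) (N.arrTime i p)

/-- The edge set of a strategy. -/
def edges (i : I) (p : P i) : Finset E := (N.route i p).toFinset

/-- Total flow on an edge. -/
def edgeFlow (f : PFlow I P) (e : E) : ℝ :=
  ∑ i, ∑ p ∈ Finset.univ.filter (fun p : P i => e ∈ N.edges i p), f i p

def DemandFeasible (f : PFlow I P) : Prop :=
  (∀ i (p : P i), 0 ≤ f i p) ∧ ∀ i, ∑ p, f i p = N.Q i

def CapacityFeasible (f : PFlow I P) : Prop :=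
  ∀ e ∈ N.driving, N.edgeFlow f e ≤ N.ν e

def Feasible (f : PFlow I P) : Prop := N.DemandFeasible f ∧ N.CapacityFeasible f

/-- `f_{i,p→q}(ε)` is an admissible ε-deviation. -/
def Admissible (f : PFlow I P) (i : I) (p q : P i) (ε : ℝ) : Prop :=
  0 < ε ∧ ε ≤ f i p ∧
    ∀ e ∈ N.boarding, e ∈ N.edges i q →
      N.edgeFlow (deviate f i p q ε) (N.succ e) ≤ N.ν (N.succ e)

/-- `q` is an available alternative to `p` for commodity `i` given `f`. -/
def Available (f : PFlow I P) (i : I) (p q : P i) : Prop :=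
  ∃ ε, N.Admissible f i p q ε

/-- Side-constrained user equilibrium. -/
def IsUE (f : PFlow I P) : Prop :=
  N.Feasible f ∧
    ∀ i (p : P i), 0 < f i p → ∀ q : P i, N.Available f i p q → N.π i p ≤ N.π i q

/-- Fixed departure times: each commodity has (at most) one allowed departure node and its
cost depends only on the arrival time. -/
def FDT : Prop :=
  ∀ i, (N.src i).card ≤ 1 ∧ ∀ t t' a : ℝ, N.cost i t a = N.cost i t' a

/-- The social cost of a flow. -/
def socialCost (f : PFlow I P) : ℝ := ∑ i, ∑ p, f i p * N.π i p

end TEN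

/-- ε-approximate user equilibrium. -/
def TEN.ApproxUE (N : TEN V E I P) (ε : ℝ) (f : PFlow I P) : Prop :=
  N.Feasible f ∧
    ∀ i (p : P i), 0 < f i p → ∀ q : P i, N.Available f i p q →
      N.π i p ≤ (1 + ε) * N.π i q

def nTail : Fin 7 → Fin 5 := ![0, 0, 1, 2, 2, 0, 0]
def nHead : Fin 7 → Fin 5 := ![0, 1, 2, 3, 2, 0, 4]
def nSucc : Fin 7 → Fin 7 := ![1, 0, 0, 0, 3, 6, 0]
def nPrev : Fin 7 → Fin 7 := ![0, 0, 1, 2, 0, 0, 0]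
def nRoute : Unit → Fin 4 → List (Fin 7) := fun _ p =>
  if p = 1 then [0, 1, 2, 3] else if p = 2 then [4, 3]
    else if p = 3 then [5, 6] else []

noncomputable def Net (ε : ℝ) : TEN (Fin 5) (Fin 7) Unit (fun _ => Fin 4) where
  tail := nTail
  head := nHead
  time := fun v => (v.val : ℝ) + 1
  boarding := {0, 4, 5}
  driving := {1, 2, 3, 6}
  succ := nSucc
  prev := nPrev
  first := {1, 6}
  ν := fun _ => 1
  Q := fun _ => 2
  src := fun _ => {0, 2}
  dst := fun _ => {3, 4}
  out := fun _ => 0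
  route := nRoute
  πout := fun _ => (1 + ε) * ((1 + ε) * (2 + ε) + 1) + 1
  cost := fun _ t a => if t = 3 then 1 else if a = 4 then 2 + ε
    else (1 + ε) * (2 + ε) + 1

@[simp] lemma net_tail (ε : ℝ) : (Net ε).tail = nTail := rfl
@[simp] lemma net_head (ε : ℝ) : (Net ε).head = nHead := rfl
@[simp] lemma net_succ (ε : ℝ) : (Net ε).succ = nSucc := rfl
@[simp] lemma net_prev (ε : ℝ) : (Net ε).prev = nPrev := rfl
@[simp] lemma net_route (ε : ℝ) : (Net ε).route = nRoute := rfl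
@[simp] lemma net_boarding (ε : ℝ) : (Net ε).boarding = {0, 4, 5} := rfl
@[simp] lemma net_driving (ε : ℝ) : (Net ε).driving = {1, 2, 3, 6} := rfl
@[simp] lemma net_first (ε : ℝ) : (Net ε).first = {1, 6} := rfl
@[simp] lemma net_src (ε : ℝ) : (Net ε).src = fun _ => {0, 2} := rfl
@[simp] lemma net_dst (ε : ℝ) : (Net ε).dst = fun _ => {3, 4} := rfl
@[simp] lemma net_out (ε : ℝ) : (Net ε).out = fun _ => 0 := rfl
@[simp] lemma net_nu (ε : ℝ) (e : Fin 7) : (Net ε).ν e = 1 := rfl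
@[simp] lemma net_Q (ε : ℝ) : (Net ε).Q = fun _ => 2 := rfl

lemma net_valid (ε : ℝ) : (Net ε).Valid := by
  refine ⟨fun _ => rfl, ?_, ?_, ?_, ?_, ?_, ?_, ?_⟩
  · intro i p hp
    simp only [net_route, net_head, net_tail, net_src, net_dst, net_out] at *
    cases i
    fin_cases p
    · exact absurd rfl hp
    · refine ⟨by decide, ?_, by decide, by decide⟩
      show List.Chain' (fun e e' => nHead e = nTail e') [0, 1, 2, 3]
      simp only [List.Chain', List.isChain_cons_cons, List.isChain_singleton, and_true]
      refine ⟨by decide, by decide, by decide⟩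
    · refine ⟨by decide, ?_, by decide, by decide⟩
      show List.Chain' (fun e e' => nHead e = nTail e') [4, 3]
      simp only [List.Chain', List.isChain_cons_cons, List.isChain_singleton, and_true]
      decide
    · refine ⟨by decide, ?_, by decide, by decide⟩
      show List.Chain' (fun e e' => nHead e = nTail e') [5, 6]
      simp only [List.Chain', List.isChain_cons_cons, List.isChain_singleton, and_true]
      decide
  · simp only [net_boarding, net_driving, net_succ, net_tail, net_head]; decide
  · simp only [net_route, net_boarding, net_succ]
    intro i p k e
    cases i
    revert e
    fin_cases p
    · simp [nRoute]
    · rcases k with _ | _ | _ | _ | k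
      · decide
      · decide
      · decide
      · decide
      · simp [nRoute]
    · rcases k with _ | _ | k
      · decide
      · decide
      · simp [nRoute]
    · rcases k with _ | _ | k
      · decide
      · decide
      · simp [nRoute]
  · intro e he hf
    simp only [net_driving, net_first, net_prev, net_nu] at *
    fin_cases e
    · exact absurd he (by decide)
    · exact absurd (by decide) hf
    · exact ⟨by decide, trivial⟩
    · exact ⟨by decide, trivial⟩
    · exact absurd he (by decide)
    · exact absurd he (by decide)
    · exact absurd (by decide) hf
  · simp only [net_route, net_driving, net_first, net_prev, net_boarding, net_succ]; decide
  · simp only [net_route, net_driving, net_first, net_boarding, net_succ]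
    intro i p e he hr hf
    cases i
    fin_cases p <;> revert e <;> decide
  · intro e
    have h : (nTail e).val ≤ (nHead e).val := by revert e; decide
    show ((nTail e).val : ℝ) + 1 ≤ ((nHead e).val : ℝ) + 1
    have := Nat.cast_le (α := ℝ) |>.mpr h
    linarith

@[simp] lemma nTail_0 : nTail 0 = 0 := rfl
@[simp] lemma nTail_4 : nTail 4 = 2 := rfl
@[simp] lemma nTail_5 : nTail 5 = 0 := rfl
@[simp] lemma nHead_3 : nHead 3 = 3 := rfl
@[simp] lemma nHead_6 : nHead 6 = 4 := rfl
@[simp] lemma fv0 : ((0 : Fin 5) : ℕ) = 0 := rfl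
@[simp] lemma fv2 : ((2 : Fin 5) : ℕ) = 2 := rfl
@[simp] lemma fv3 : ((3 : Fin 5) : ℕ) = 3 := rfl
@[simp] lemma fv4 : ((4 : Fin 5) : ℕ) = 4 := rfl

lemma pi0 (ε : ℝ) : (Net ε).π () 0 = (1 + ε) * ((1 + ε) * (2 + ε) + 1) + 1 := by
  simp [TEN.π, Net]

lemma pi1 (ε : ℝ) : (Net ε).π () 1 = 2 + ε := by
  have h1 : (Net ε).depTime () 1 = 1 := by
    norm_num [TEN.depTime, Net, nRoute]
  have h2 : (Net ε).arrTime () 1 = 4 := by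
    norm_num [TEN.arrTime, Net, nRoute]
  simp [TEN.π, h1, h2]
  norm_num [Net]

lemma pi2 (ε : ℝ) : (Net ε).π () 2 = 1 := by
  have hr : nRoute () 2 = [4, 3] := rfl
  have h1 : (Net ε).depTime () 2 = 3 := by
    norm_num [TEN.depTime, Net, hr]
  have h2 : (Net ε).arrTime () 2 = 4 := by
    norm_num [TEN.arrTime, Net, hr]
  simp [TEN.π, h1, h2]
  norm_num [Net]

lemma pi3 (ε : ℝ) : (Net ε).π () 3 = (1 + ε) * (2 + ε) + 1 := by
  have hr : nRoute () 3 = [5, 6] := rfl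
  have h1 : (Net ε).depTime () 3 = 1 := by
    norm_num [TEN.depTime, Net, hr]
  have h2 : (Net ε).arrTime () 3 = 5 := by
    norm_num [TEN.arrTime, Net, hr]
  simp [TEN.π, h1, h2]
  norm_num [Net]

lemma ef1 (ε : ℝ) (f : PFlow Unit fun _ => Fin 4) :
    (Net ε).edgeFlow f 1 = f () 1 := by
  simp [TEN.edgeFlow, TEN.edges, Finset.sum_filter, Fin.sum_univ_four, nRoute]

lemma ef2 (ε : ℝ) (f : PFlow Unit fun _ => Fin 4) :
    (Net ε).edgeFlow f 2 = f () 1 := by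
  simp [TEN.edgeFlow, TEN.edges, Finset.sum_filter, Fin.sum_univ_four, nRoute]

lemma ef3 (ε : ℝ) (f : PFlow Unit fun _ => Fin 4) :
    (Net ε).edgeFlow f 3 = f () 1 + f () 2 := by
  simp [TEN.edgeFlow, TEN.edges, Finset.sum_filter, Fin.sum_univ_four, nRoute]

lemma ef6 (ε : ℝ) (f : PFlow Unit fun _ => Fin 4) :
    (Net ε).edgeFlow f 6 = f () 3 := by
  simp [TEN.edgeFlow, TEN.edges, Finset.sum_filter, Fin.sum_univ_four, nRoute]

lemma dev_apply (f : PFlow Unit fun _ => Fin 4) (p q r : Fin 4) (e : ℝ) :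
    deviate f () p q e () r
      = f () r + e * ((if r = q then 1 else 0) - (if r = p then 1 else 0)) := by
  simp [deviate]

lemma pi_nonneg (ε : ℝ) (hε : 0 < ε) (q : Fin 4) : 0 ≤ (Net ε).π () q := by
  fin_cases q
  · rw [show ((⟨0, by norm_num⟩ : Fin 4)) = 0 from rfl, pi0]; nlinarith [hε, sq_nonneg ε]
  · rw [show ((⟨1, by norm_num⟩ : Fin 4)) = 1 from rfl, pi1]; linarith
  · rw [show ((⟨2, by norm_num⟩ : Fin 4)) = 2 from rfl, pi2]; norm_num
  · rw [show ((⟨3, by norm_num⟩ : Fin 4)) = 3 from rfl, pi3]; nlinarith [hε, sq_nonneg ε]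

lemma feas (ε : ℝ) : ∃ f, (Net ε).Feasible f := by
  refine ⟨fun _ p => if p = 2 then 1 else if p = 3 then 1 else 0, ⟨?_, ?_⟩, ?_⟩
  · intro i p
    dsimp only
    split
    · norm_num
    · split <;> norm_num
  · intro i; cases i
    simp only [net_Q]
    rw [Fin.sum_univ_four,
      if_neg (show (0 : Fin 4) ≠ 2 by decide), if_neg (show (0 : Fin 4) ≠ 3 by decide),
      if_neg (show (1 : Fin 4) ≠ 2 by decide), if_neg (show (1 : Fin 4) ≠ 3 by decide),
      if_pos (rfl : (2 : Fin 4) = 2),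
      if_neg (show (3 : Fin 4) ≠ 2 by decide), if_pos (rfl : (3 : Fin 4) = 3)]
    norm_num
  · intro e he
    simp only [net_driving] at he
    fin_cases he
    · rw [ef1, net_nu, if_neg (show (1 : Fin 4) ≠ 2 by decide), if_neg (show (1 : Fin 4) ≠ 3 by decide)]; norm_num
    · rw [ef2, net_nu]
      rw [if_neg (show (1 : Fin 4) ≠ 2 by decide)]
      rw [if_neg (show (1 : Fin 4) ≠ 3 by decide)]
      norm_num
    · rw [ef3, net_nu]
      rw [if_neg (show (1 : Fin 4) ≠ 2 by decide)]
      rw [if_neg (show (1 : Fin 4) ≠ 3 by decide)]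
      rw [if_pos (rfl : (2 : Fin 4) = 2)]
      norm_num
    · rw [ef6, net_nu, if_neg (show (3 : Fin 4) ≠ 2 by decide), if_pos (rfl : (3 : Fin 4) = 3)]

lemma key (ε : ℝ) (hε : 0 < ε) (f : PFlow Unit fun _ => Fin 4)
    (hfeas : (Net ε).Feasible f)
    (h : ∀ p : Fin 4, 0 < f () p → ∀ q : Fin 4, (Net ε).Available f () p q →
      (Net ε).π () p ≤ (1 + ε) * (Net ε).π () q) : False := by
  obtain ⟨⟨hnn, hQ⟩, hcap⟩ := hfeas
  have hsum : f () 0 + f () 1 + f () 2 + f () 3 = 2 := by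
    have := hQ (); rwa [Fin.sum_univ_four] at this
  have hab : f () 1 + f () 2 ≤ 1 := by
    have := hcap 3 (by rw [net_driving]; decide); rwa [ef3, net_nu] at this
  have hc : f () 3 ≤ 1 := by
    have := hcap 6 (by rw [net_driving]; decide); rwa [ef6, net_nu] at this
  have h0 := hnn () 0; have h1 := hnn () 1; have h2 := hnn () 2; have h3 := hnn () 3
  by_cases hc1 : f () 3 < 1
  · -- outside option used; deviate to the red vehicle
    have hd : 0 < f () 0 := by linarith
    have havail : (Net ε).Available f () 0 3 := by
      refine ⟨min (f () 0) (1 - f () 3), lt_min hd (by linarith), min_le_left _ _, ?_⟩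
      intro e he hq
      simp only [net_boarding] at he
      simp only [TEN.edges, net_route] at hq
      fin_cases he
      · exact absurd hq (by decide)
      · exact absurd hq (by decide)
      · rw [net_succ, show nSucc 5 = 6 from rfl, ef6, net_nu, dev_apply]
        have hm : min (f () 0) (1 - f () 3) ≤ 1 - f () 3 := min_le_right _ _
        rw [if_pos (rfl : (3 : Fin 4) = 3), if_neg (show (3 : Fin 4) ≠ 0 by decide)]
        linarith
    have := h 0 hd 3 havail
    rw [pi0, pi3] at this
    linarith
  · have hc3 : f () 3 = 1 := le_antisymm hc (not_lt.mp hc1)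
    by_cases ha : 0 < f () 1
    · -- blue early boarder deviates to late boarding
      have havail : (Net ε).Available f () 1 2 := by
        refine ⟨f () 1, ha, le_refl _, ?_⟩
        intro e he hq
        simp only [net_boarding] at he
        simp only [TEN.edges, net_route] at hq
        fin_cases he
        · exact absurd hq (by decide)
        · rw [net_succ, show nSucc 4 = 3 from rfl, ef3, net_nu, dev_apply, dev_apply]
          rw [if_neg (show (1 : Fin 4) ≠ 2 by decide), if_pos (rfl : (1 : Fin 4) = 1),
            if_pos (rfl : (2 : Fin 4) = 2), if_neg (show (2 : Fin 4) ≠ 1 by decide)]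
          linarith
        · exact absurd hq (by decide)
      have := h 1 ha 2 havail
      rw [pi1, pi2] at this
      linarith
    · have ha0 : f () 1 = 0 := le_antisymm (not_lt.mp ha) h1
      by_cases hb : f () 2 < 1
      · -- outside option used; deviate to late blue boarding
        have hd : 0 < f () 0 := by linarith
        have havail : (Net ε).Available f () 0 2 := by
          refine ⟨min (f () 0) (1 - f () 2), lt_min hd (by linarith), min_le_left _ _, ?_⟩
          intro e he hq
          simp only [net_boarding] at he
          simp only [TEN.edges, net_route] at hq
          fin_cases he
          · exact absurd hq (by decide)
          · rw [net_succ, show nSucc 4 = 3 from rfl, ef3, net_nu, dev_apply, dev_apply]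
            have hm : min (f () 0) (1 - f () 2) ≤ 1 - f () 2 := min_le_right _ _
            rw [if_neg (show (1 : Fin 4) ≠ 2 by decide), if_neg (show (1 : Fin 4) ≠ 0 by decide),
              if_pos (rfl : (2 : Fin 4) = 2), if_neg (show (2 : Fin 4) ≠ 0 by decide)]
            linarith
          · exact absurd hq (by decide)
        have := h 0 hd 2 havail
        rw [pi0, pi2] at this
        have hX : 2 ≤ (1 + ε) * (2 + ε) := by nlinarith
        nlinarith [mul_le_mul_of_nonneg_left hX (by linarith : (0:ℝ) ≤ 1 + ε)]
      · -- red rider deviates to the full-looking blue route (boarding is free)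
        have hb2 : f () 2 = 1 := le_antisymm (by linarith) (not_lt.mp hb)
        have havail : (Net ε).Available f () 3 1 := by
          refine ⟨1, one_pos, hc3.ge, ?_⟩
          intro e he hq
          simp only [net_boarding] at he
          simp only [TEN.edges, net_route] at hq
          fin_cases he
          · rw [net_succ, show nSucc 0 = 1 from rfl, ef1, net_nu, dev_apply]
            rw [if_pos (rfl : (1 : Fin 4) = 1), if_neg (show (1 : Fin 4) ≠ 3 by decide)]
            linarith
          · exact absurd hq (by decide)
          · exact absurd hq (by decide)
        have := h 3 (by rw [hc3]; norm_num) 1 havail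
        rw [pi3, pi1] at this
        nlinarith

/-- For every `ε > 0` there is a single-commodity schedule-based transit
network instance with departure time choice (demand 2) that is structurally valid, admits a
feasible flow, but admits no side-constrained user equilibrium and no ε-approximate user
equilibrium. -/
theorem stmt9 :
    ∀ ε > (0 : ℝ), ∃ (n m k : ℕ) (N : TEN (Fin n) (Fin m) Unit fun _ => Fin k),
      N.Valid ∧ N.Q () = 2 ∧ (∃ f, N.Feasible f) ∧
        (¬ ∃ f, N.IsUE f) ∧ ¬ ∃ f, N.ApproxUE ε f := by
  intro ε hε
  refine ⟨5, 7, 4, Net ε, net_valid ε, rfl, feas ε, ?_, ?_⟩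
  · rintro ⟨f, hfeas, hue⟩
    refine key ε hε f hfeas fun p hp q hq => (hue () p hp q hq).trans ?_
    exact le_mul_of_one_le_left (pi_nonneg ε hε q) (by linarith)
  · rintro ⟨f, hfeas, hue⟩
    exact key ε hε f hfeas (hue ())
end

section
/- The price of stability of side-constrained user equilibria is unbounded, even for single-commodity instances with fixed departure times: for every K there is an instance in which the (unique) user equilibrium has social cost more than K times the system-optimal social cost. -/
open scoped BigOperators
open Filter

variable {V E : Type} [Fintype V] [DecidableEq V] [Fintype E] [DecidableEq E]
  {I : Type} [Fintype I] [DecidableEq I]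
  {P : I → Type} [∀ i, Fintype (P i)] [∀ i, DecidableEq (P i)]

noncomputable def NK (K : ℝ) : TEN (Fin 5) (Fin 8) Unit (fun _ => Fin 4) where
  tail e := match e with | 0 => 0 | 1 => 0 | 2 => 1 | 3 => 1 | 4 => 1 | 5 => 2 | 6 => 2 | 7 => 0
  head e := match e with | 0 => 0 | 1 => 1 | 2 => 4 | 3 => 1 | 4 => 2 | 5 => 3 | 6 => 2 | 7 => 2
  time v := match v with | 0 => 1 | 1 => 2 | 2 => 3 | 3 => 4 | 4 => 5
  boarding := {0, 3, 6}
  driving := {1, 2, 4, 5}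
  succ e := match e with | 0 => 1 | 3 => 4 | 6 => 5 | _ => 0
  prev e := match e with | 2 => 1 | 5 => 4 | _ => 0
  first := {1, 4}
  ν _ := 1
  Q _ := 2
  src _ := {0}
  dst _ := {3, 4}
  out _ := 3
  route _ p := match p with
    | 0 => [0, 1, 3, 4, 5]
    | 1 => [0, 1, 2]
    | 2 => [7, 6, 5]
    | 3 => []
  πout _ := 7 * K + 7
  cost _ _ a := a - 1

section NKsimp
variable (K : ℝ) (i : Unit)

@[simp] lemma NK_boarding : (NK K).boarding = {0, 3, 6} := rfl
@[simp] lemma NK_driving : (NK K).driving = {1, 2, 4, 5} := rfl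
@[simp] lemma NK_first : (NK K).first = {1, 4} := rfl
@[simp] lemma NK_src : (NK K).src i = {0} := rfl
@[simp] lemma NK_dst : (NK K).dst i = {3, 4} := rfl
@[simp] lemma NK_out : (NK K).out i = 3 := rfl
@[simp] lemma NK_Q : (NK K).Q i = 2 := rfl
@[simp] lemma NK_nu (e : Fin 8) : (NK K).ν e = 1 := rfl
@[simp] lemma NK_piout : (NK K).πout i = 7 * K + 7 := rfl
@[simp] lemma NK_cost (t a : ℝ) : (NK K).cost i t a = a - 1 := rfl

@[simp] lemma NK_route0 : (NK K).route i 0 = [0, 1, 3, 4, 5] := rfl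
@[simp] lemma NK_route1 : (NK K).route i 1 = [0, 1, 2] := rfl
@[simp] lemma NK_route2 : (NK K).route i 2 = [7, 6, 5] := rfl
@[simp] lemma NK_route3 : (NK K).route i 3 = [] := rfl

@[simp] lemma NK_tail0 : (NK K).tail 0 = 0 := rfl
@[simp] lemma NK_tail1 : (NK K).tail 1 = 0 := rfl
@[simp] lemma NK_tail2 : (NK K).tail 2 = 1 := rfl
@[simp] lemma NK_tail3 : (NK K).tail 3 = 1 := rfl
@[simp] lemma NK_tail4 : (NK K).tail 4 = 1 := rfl
@[simp] lemma NK_tail5 : (NK K).tail 5 = 2 := rfl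
@[simp] lemma NK_tail6 : (NK K).tail 6 = 2 := rfl
@[simp] lemma NK_tail7 : (NK K).tail 7 = 0 := rfl

@[simp] lemma NK_head0 : (NK K).head 0 = 0 := rfl
@[simp] lemma NK_head1 : (NK K).head 1 = 1 := rfl
@[simp] lemma NK_head2 : (NK K).head 2 = 4 := rfl
@[simp] lemma NK_head3 : (NK K).head 3 = 1 := rfl
@[simp] lemma NK_head4 : (NK K).head 4 = 2 := rfl
@[simp] lemma NK_head5 : (NK K).head 5 = 3 := rfl
@[simp] lemma NK_head6 : (NK K).head 6 = 2 := rfl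
@[simp] lemma NK_head7 : (NK K).head 7 = 2 := rfl

@[simp] lemma NK_succ0 : (NK K).succ 0 = 1 := rfl
@[simp] lemma NK_succ3 : (NK K).succ 3 = 4 := rfl
@[simp] lemma NK_succ6 : (NK K).succ 6 = 5 := rfl

@[simp] lemma NK_prev2 : (NK K).prev 2 = 1 := rfl
@[simp] lemma NK_prev5 : (NK K).prev 5 = 4 := rfl

@[simp] lemma NK_time0 : (NK K).time 0 = 1 := rfl
@[simp] lemma NK_time1 : (NK K).time 1 = 2 := rfl
@[simp] lemma NK_time2 : (NK K).time 2 = 3 := rfl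
@[simp] lemma NK_time3 : (NK K).time 3 = 4 := rfl
@[simp] lemma NK_time4 : (NK K).time 4 = 5 := rfl

end NKsimp

lemma NK_valid (K : ℝ) : (NK K).Valid := by
  refine ⟨fun i => rfl, ?_, ?_, ?_, ?_, ?_, ?_, ?_⟩
  · intro i p hp
    fin_cases p <;> simp_all [List.Chain']
  · intro e he
    fin_cases he <;> simp
  · intro i p k e hk hb
    fin_cases p <;>
      [ (rcases k with _|_|_|_|_|k); (rcases k with _|_|_|k); (rcases k with _|_|_|k); skip ] <;>
      simp_all <;> (try cases hk) <;> simp_all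
  · intro e he hf
    fin_cases he <;> simp_all
  · intro i p e he hr hf
    fin_cases p <;> fin_cases he <;> simp_all
  · intro i p e he hr hf
    fin_cases p <;> fin_cases he <;> simp_all
  · intro e
    fin_cases e <;> simp <;> norm_num

lemma NK_fdt (K : ℝ) : (NK K).FDT := by
  intro i
  exact ⟨by simp, fun t t' a => rfl⟩

lemma NK_edgeFlow (K : ℝ) (f : PFlow Unit fun _ => Fin 4) (e : Fin 8) :
    (NK K).edgeFlow f e =
      (if e ∈ (NK K).route () 0 then f () 0 else 0) +
      (if e ∈ (NK K).route () 1 then f () 1 else 0) +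
      (if e ∈ (NK K).route () 2 then f () 2 else 0) +
      (if e ∈ (NK K).route () 3 then f () 3 else 0) := by
  simp [TEN.edgeFlow, TEN.edges, Finset.sum_filter, Fin.sum_univ_four, add_assoc]

lemma NK_ef1 (K : ℝ) (f : PFlow Unit fun _ => Fin 4) :
    (NK K).edgeFlow f 1 = f () 0 + f () 1 := by
  rw [NK_edgeFlow]; simp

lemma NK_ef2 (K : ℝ) (f : PFlow Unit fun _ => Fin 4) :
    (NK K).edgeFlow f 2 = f () 1 := by
  rw [NK_edgeFlow]; simp

lemma NK_ef4 (K : ℝ) (f : PFlow Unit fun _ => Fin 4) :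
    (NK K).edgeFlow f 4 = f () 0 := by
  rw [NK_edgeFlow]; simp

lemma NK_ef5 (K : ℝ) (f : PFlow Unit fun _ => Fin 4) :
    (NK K).edgeFlow f 5 = f () 0 + f () 2 := by
  rw [NK_edgeFlow]; simp

@[simp] lemma deviate_apply (f : PFlow Unit fun _ => Fin 4) (p q : Fin 4) (ε : ℝ) (r : Fin 4) :
    deviate f () p q ε () r
      = f () r + ε * ((if r = q then 1 else 0) - (if r = p then 1 else 0)) := by
  simp [deviate]

@[simp] lemma NK_pi0 (K : ℝ) : (NK K).π () 0 = 3 := by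
  simp [TEN.π, TEN.depTime, TEN.arrTime]; norm_num

@[simp] lemma NK_pi1 (K : ℝ) : (NK K).π () 1 = 4 := by
  simp [TEN.π, TEN.depTime, TEN.arrTime]; norm_num

@[simp] lemma NK_pi2 (K : ℝ) : (NK K).π () 2 = 3 := by
  simp [TEN.π, TEN.depTime, TEN.arrTime]; norm_num

@[simp] lemma NK_pi3 (K : ℝ) : (NK K).π () 3 = 7 * K + 7 := by
  simp [TEN.π]

lemma NK_socialCost (K : ℝ) (f : PFlow Unit fun _ => Fin 4) :
    (NK K).socialCost f
      = f () 0 * 3 + f () 1 * 4 + f () 2 * 3 + f () 3 * (7 * K + 7) := by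
  simp [TEN.socialCost, Fin.sum_univ_four, add_assoc]

/-- The candidate user equilibrium: one unit on the zigzag path, one on the outside option. -/
noncomputable def fUE : PFlow Unit fun _ => Fin 4 := fun _ p => if p = 0 ∨ p = 3 then 1 else 0

lemma NK_fUE_isUE (K : ℝ) (hK : 0 < K) : (NK K).IsUE fUE := by
  constructor
  · refine ⟨⟨fun i p => ?_, fun i => ?_⟩, fun e he => ?_⟩
    · cases i; simp only [fUE]; split_ifs <;> norm_num
    · cases i; rw [Fin.sum_univ_four]; simp [fUE]; norm_num
    · fin_cases he <;>
        simp only [NK_ef1, NK_ef2, NK_ef4, NK_ef5, NK_nu] <;> simp [fUE]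
  · intro i p hp q hq
    cases i
    fin_cases p
    · fin_cases q <;> simp <;> linarith
    · simp [fUE] at hp
    · simp [fUE] at hp
    · obtain ⟨ε, hε, hle, hcap⟩ := hq
      fin_cases q
      · exfalso
        have h := hcap 0 (by simp) (by simp [TEN.edges])
        rw [NK_succ0, NK_ef1, NK_nu] at h
        simp [fUE] at h
        linarith
      · exfalso
        have h := hcap 0 (by simp) (by simp [TEN.edges])
        rw [NK_succ0, NK_ef1, NK_nu] at h
        simp [fUE] at h
        linarith
      · exfalso
        have h := hcap 6 (by simp) (by simp [TEN.edges])
        rw [NK_succ6, NK_ef5, NK_nu] at h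
        simp [fUE] at h
        linarith
      · simp

/-- The system-optimal flow: one unit on the direct blue path, one on the direct pink path. -/
noncomputable def gSO : PFlow Unit fun _ => Fin 4 := fun _ p => if p = 1 ∨ p = 2 then 1 else 0

lemma NK_gSO_feasible (K : ℝ) : (NK K).Feasible gSO := by
  refine ⟨⟨fun i p => ?_, fun i => ?_⟩, fun e he => ?_⟩
  · cases i; simp only [gSO]; split_ifs <;> norm_num
  · cases i; rw [Fin.sum_univ_four]; simp [gSO]; norm_num
  · fin_cases he <;>
      simp only [NK_ef1, NK_ef2, NK_ef4, NK_ef5, NK_nu] <;> simp [gSO]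

lemma NK_gSO_socialCost (K : ℝ) : (NK K).socialCost gSO = 7 := by
  rw [NK_socialCost]; simp [gSO]; ring

lemma NK_ue_unique (K : ℝ) (hK : 0 < K) (f : PFlow Unit fun _ => Fin 4)
    (h : (NK K).IsUE f) :
    f () 0 = 1 ∧ f () 1 = 0 ∧ f () 2 = 0 ∧ f () 3 = 1 := by
  obtain ⟨⟨⟨hnn, hsum⟩, hcap⟩, hue⟩ := h
  have hs := hsum ()
  rw [Fin.sum_univ_four, NK_Q] at hs
  have hc1 := hcap 1 (by simp); rw [NK_ef1, NK_nu] at hc1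
  have hc2 := hcap 2 (by simp); rw [NK_ef2, NK_nu] at hc2
  have hc4 := hcap 4 (by simp); rw [NK_ef4, NK_nu] at hc4
  have hc5 := hcap 5 (by simp); rw [NK_ef5, NK_nu] at hc5
  have h00 := hnn () 0
  have h01 := hnn () 1
  have h02 := hnn () 2
  have h03 := hnn () 3
  -- Step 1: no flow on the direct blue path
  have hb : f () 1 = 0 := by
    by_contra hb
    have hbpos : 0 < f () 1 := lt_of_le_of_ne h01 (Ne.symm hb)
    have ha1 : f () 0 < 1 := by linarith
    have havail : (NK K).Available f () 1 0 := by
      refine ⟨min (f () 1) (1 - f () 0), ⟨lt_min (by linarith) (by linarith), min_le_left _ _, ?_⟩⟩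
      intro e he hq
      fin_cases he
      · rw [NK_succ0, NK_ef1, NK_nu]
        simp only [deviate_apply]
        have : min (f () 1) (1 - f () 0) ≤ f () 1 := min_le_left _ _
        simp; linarith
      · rw [NK_succ3, NK_ef4, NK_nu]
        simp only [deviate_apply]
        have : min (f () 1) (1 - f () 0) ≤ 1 - f () 0 := min_le_right _ _
        simp; linarith
      · simp [TEN.edges] at hq
    have := hue () 1 hbpos 0 havail
    rw [NK_pi0, NK_pi1] at this
    linarith
  -- Step 2: all flow on the zigzag path
  have ha : f () 0 = 1 := by
    by_contra haz
    have ha1 : f () 0 < 1 := lt_of_le_of_ne hc4 haz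
    have h3pos : 0 < f () 3 := by linarith
    have havail : (NK K).Available f () 3 0 := by
      refine ⟨min (f () 3) (1 - f () 0), ⟨lt_min (by linarith) (by linarith), min_le_left _ _, ?_⟩⟩
      intro e he hq
      fin_cases he
      · rw [NK_succ0, NK_ef1, NK_nu]
        simp only [deviate_apply]
        have : min (f () 3) (1 - f () 0) ≤ 1 - f () 0 := min_le_right _ _
        simp; linarith
      · rw [NK_succ3, NK_ef4, NK_nu]
        simp only [deviate_apply]
        have : min (f () 3) (1 - f () 0) ≤ 1 - f () 0 := min_le_right _ _
        simp; linarith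
      · simp [TEN.edges] at hq
    have := hue () 3 h3pos 0 havail
    rw [NK_pi0, NK_pi3] at this
    linarith
  refine ⟨ha, hb, by linarith, by linarith⟩

/-- The price of stability of side-constrained user equilibria is
unbounded, even for single-commodity instances with fixed departure times: for every `K`
there is a valid fixed-departure-time instance possessing a user equilibrium and a feasible
flow `g` of positive social cost (in particular a system optimum) such that every user
equilibrium has social cost more than `K` times the social cost of `g`. -/
theorem stmt11 :
    ∀ K > (0 : ℝ), ∃ (n m k : ℕ) (N : TEN (Fin n) (Fin m) Unit fun _ => Fin k),
      N.Valid ∧ N.FDT ∧ (∃ f, N.IsUE f) ∧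
        ∃ g, N.Feasible g ∧ 0 < N.socialCost g ∧
          ∀ f, N.IsUE f → N.socialCost f > K * N.socialCost g := by
  intro K hK
  refine ⟨5, 8, 4, NK K, NK_valid K, NK_fdt K, ⟨fUE, NK_fUE_isUE K hK⟩,
    gSO, NK_gSO_feasible K, by rw [NK_gSO_socialCost]; norm_num, ?_⟩
  intro f hf
  obtain ⟨h0, h1, h2, h3⟩ := NK_ue_unique K hK f hf
  rw [NK_gSO_socialCost, NK_socialCost, h0, h1, h2, h3]
  linarith
end
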